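/- arXiv:0902.1330 — 2 statements merged into one kernel-verified Lean document; each statement's English description precedes it below -/
import Mathlib

section
/- For every injective map τ : D → D with inverse σ = τ^{−1} : τ(D) → D and every nonempty collection H ⊆ τ(D), one has ∫₀¹ μ_H(t) dt ≤ |σ(H)*| · ‖S_σ‖_{BMO}²; consequently C₁ ≤ ‖S_σ‖_{BMO}². -/
open MeasureTheory Set
open scoped ENNReal NNReal Classical

noncomputable section

/-- A dyadic subinterval of `[0,1)`: the half-open interval
`[k/2^n, (k+1)/2^n)` with `k < 2^n`. -/
structure DyadicI where
  n : ℕ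
  k : ℕ
  hk : k < 2 ^ n

instance : Nonempty DyadicI := ⟨⟨0, 0, by norm_num⟩⟩

namespace DyadicI

/-- The length `|I| = 2^{-n}` of a dyadic interval. -/
def len (I : DyadicI) : ℝ := (2 : ℝ) ^ (-(I.n : ℤ))

/-- The left endpoint `k 2^{-n}` of a dyadic interval. -/
def lep (I : DyadicI) : ℝ := (I.k : ℝ) * I.len

/-- The underlying point set `[k/2^n, (k+1)/2^n)` of a dyadic interval. -/
def toSet (I : DyadicI) : Set ℝ := Set.Ico I.lep (I.lep + I.len)

/-- The `L^∞`-normalized Haar function `h_I`: `1` on the left half of `I`,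
`-1` on the right half of `I`, `0` off `I`. -/
def haar (I : DyadicI) (t : ℝ) : ℝ :=
  if t ∈ Set.Ico I.lep (I.lep + I.len / 2) then 1
  else if t ∈ Set.Ico (I.lep + I.len / 2) (I.lep + I.len) then -1
  else 0

end DyadicI

open DyadicI

section Defs

variable {X : Type*} [NormedAddCommGroup X] [NormedSpace ℝ X]

/-- The square function `𝕊(f)` of the `X`-valued Haar expansion `f = ∑_{I ∈ s} x_I h_I`:
`𝕊(f)(t) = (E_ε ‖∑_I ε_I x_I h_I(t)‖²)^{1/2}`, the average being taken over all
choices of signs `ε_I ∈ {±1}`, `I ∈ s`. -/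
def sqFn (s : Finset DyadicI) (x : DyadicI → X) (t : ℝ) : ℝ :=
  Real.sqrt ((∑ ε : {I // I ∈ s} → Bool,
    ‖∑ I ∈ s.attach, ((if ε I then (1 : ℝ) else -1) * haar I.1 t) • x I.1‖ ^ 2) /
      2 ^ s.card)

/-- The `H^p_X` (quasi-)norm of `f = ∑_{I ∈ s} x_I h_I`:
`‖f‖ = (∫₀¹ 𝕊(f)(t)^p dt)^{1/p}`. -/
def HpNormV (p : ℝ) (s : Finset DyadicI) (x : DyadicI → X) : ℝ :=
  (∫ t in Set.Icc (0 : ℝ) 1, sqFn s x t ^ p) ^ (1 / p)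

/-- The coefficients of `(T_{τ,p} ⊗ Id_X)(f)` for `f = ∑_{I ∈ s} x_I h_I`, namely
`(T_{τ,p} ⊗ Id_X)(f) = ∑_{I ∈ s} (|I|/|τ(I)|)^{1/p} x_I h_{τ(I)}`, as a family of
coefficients indexed by the Haar support `τ(s)`. -/
def rearrCoef (τ : DyadicI → DyadicI) (p : ℝ) (s : Finset DyadicI) (x : DyadicI → X) :
    DyadicI → X :=
  fun J => ∑ I ∈ s, if τ I = J then ((len I / len (τ I)) ^ (1 / p)) • x I else 0

/-- The scalar dyadic square function `S(f) = (∑_I a_I² 1_I)^{1/2}`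
of `f = ∑_{I ∈ s} a_I h_I`. -/
def sqFnS (s : Finset DyadicI) (a : DyadicI → ℝ) (t : ℝ) : ℝ :=
  Real.sqrt (∑ I ∈ s, a I ^ 2 * Set.indicator (toSet I) (fun _ => (1 : ℝ)) t)

/-- The scalar dyadic `H^p` (quasi-)norm `‖f‖_{H^p} = ‖S(f)‖_{L^p[0,1]}`. -/
def HpNormS (p : ℝ) (s : Finset DyadicI) (a : DyadicI → ℝ) : ℝ :=
  (∫ t in Set.Icc (0 : ℝ) 1, sqFnS s a t ^ p) ^ (1 / p)

/-- The coefficients of the scalar rearrangement operator `T_{τ,p}` applied to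
`f = ∑_{I ∈ s} a_I h_I`; `T_{τ,p}` is determined by
`T_{τ,p}(h_I/|I|^{1/p}) = h_{τ(I)}/|τ(I)|^{1/p}`. -/
def rearrCoefS (τ : DyadicI → DyadicI) (p : ℝ) (s : Finset DyadicI) (a : DyadicI → ℝ) :
    DyadicI → ℝ :=
  fun J => ∑ I ∈ s, if τ I = J then ((len I / len (τ I)) ^ (1 / p)) * a I else 0

/-- The operator norm `‖T_{τ,p} ⊗ Id_X : H^p_X → H^p_X‖ ∈ [0,∞]`, computed as the
supremum over finitely supported `f` in the unit ball of `H^p_X`. -/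
def hpOpNorm (τ : DyadicI → DyadicI) (p : ℝ) (X : Type*) [NormedAddCommGroup X]
    [NormedSpace ℝ X] : ℝ≥0∞ :=
  ⨆ (s : Finset DyadicI) (x : DyadicI → X) (_ : HpNormV p s x ≤ 1),
    ENNReal.ofReal (HpNormV p (s.image τ) (rearrCoef τ p s x))

/-- The scalar operator norm `‖T_{τ,p} : H^p → H^p‖ ∈ [0,∞]`. -/
def hpOpNormS (τ : DyadicI → DyadicI) (p : ℝ) : ℝ≥0∞ :=
  ⨆ (s : Finset DyadicI) (a : DyadicI → ℝ) (_ : HpNormS p s a ≤ 1),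
    ENNReal.ofReal (HpNormS p (s.image τ) (rearrCoefS τ p s a))

/-- For `H = τ(L)` (so that `σ(J) = I` for `J = τ(I)`, `I ∈ L`), the maximal function
`μ_H(t) = sup_{J ∈ H} (|σ(J)|/|J|) 1_J(t) = sup_{I ∈ L} (|I|/|τ(I)|) 1_{τ(I)}(t)`,
as an `[0,∞]`-valued function. -/
def muSet (τ : DyadicI → DyadicI) (L : Set DyadicI) (t : ℝ) : ℝ≥0∞ :=
  ⨆ (I : DyadicI) (_ : I ∈ L),
    ENNReal.ofReal (len I / len (τ I) * Set.indicator (toSet (τ I)) (fun _ => (1 : ℝ)) t)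

/-- For `H = τ(L)` with `L` finite, the (real-valued) maximal function
`μ_H(t) = max_{I ∈ L} (|I|/|τ(I)|) 1_{τ(I)}(t)`. -/
def muFin (τ : DyadicI → DyadicI) (L : Finset DyadicI) (t : ℝ) : ℝ :=
  ((L.sup fun I =>
    Real.toNNReal (len I / len (τ I) * Set.indicator (toSet (τ I)) (fun _ => (1 : ℝ)) t) : ℝ≥0) : ℝ)

/-- The point set `L* = ⋃_{I ∈ L} I` covered by a collection of dyadic intervals. -/
def pointSet (L : Set DyadicI) : Set ℝ := ⋃ I ∈ L, toSet I

/-- The constant `C₁ = sup_{H ⊆ τ(D), H ≠ ∅} (1/|σ(H)*|) ∫₀¹ μ_H(t) dt`, where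
nonempty collections `H ⊆ τ(D)` are parametrized as `H = τ(L)` for nonempty `L ⊆ D`,
so that `σ(H)* = L*`. -/
def Cone (τ : DyadicI → DyadicI) : ℝ≥0∞ :=
  ⨆ (L : Set DyadicI) (_ : L.Nonempty),
    (∫⁻ t in Set.Icc (0 : ℝ) 1, muSet τ L t) / volume (pointSet L)

/-- The square of the dyadic BMO norm of `g = ∑_{J ∈ s} a_J h_J`:
`‖g‖_{BMO}² = sup_{I ∈ D} (1/|I|) ∑_{J ⊆ I} a_J² |J|`. -/
def bmoSq (s : Finset DyadicI) (a : DyadicI → ℝ) : ℝ≥0∞ :=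
  ⨆ I : DyadicI, ENNReal.ofReal
    ((∑ J ∈ s.filter fun J => toSet J ⊆ toSet I, a J ^ 2 * len J) / len I)

/-- The coefficients of `S_σ(g)` for `g = ∑_{J ∈ s} a_J h_J`, where `σ = τ⁻¹` on `τ(D)`:
`S_σ(h_J) = h_{σ(J)}` for `J ∈ τ(D)` and `S_σ(h_J) = 0` otherwise, so that the
coefficient of `h_K` in `S_σ(g)` is `a_{τ(K)}` if `τ(K) ∈ s`, and `0` otherwise. -/
def sSigmaCoef (τ : DyadicI → DyadicI) (s : Finset DyadicI) (a : DyadicI → ℝ) :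
    DyadicI → ℝ :=
  fun K => if τ K ∈ s then a (τ K) else 0

/-- The Haar support of `S_σ(g)` for `g` with Haar support `s`:
`σ(s ∩ τ(D))`, i.e. the preimage under `τ` of `s`. -/
def sSigmaSupp (τ : DyadicI → DyadicI) (s : Finset DyadicI) : Finset DyadicI :=
  (s.filter fun J => J ∈ Set.range τ).image (Function.invFun τ)

/-- The operator norm `‖S_σ‖_{BMO} ∈ [0,∞]` of `S_σ` with respect to the dyadic BMO
norm, computed over finitely supported Haar expansions. -/
def bmoOpNorm (τ : DyadicI → DyadicI) : ℝ≥0∞ :=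
  ⨆ (s : Finset DyadicI) (a : DyadicI → ℝ) (_ : bmoSq s a ≤ 1),
    (bmoSq (sSigmaSupp τ s) (sSigmaCoef τ s a)) ^ (1 / 2 : ℝ)

/-- The Carleson constant `⟦C⟧ = sup_{I ∈ C} (1/|I|) ∑_{J ∈ C, J ⊆ I} |J| ∈ [0,∞]`
of a collection of dyadic intervals. -/
def carleson (C : Set DyadicI) : ℝ≥0∞ :=
  ⨆ (I : DyadicI) (_ : I ∈ C),
    (∑' J : {J : DyadicI // J ∈ C ∧ toSet J ⊆ toSet I}, ENNReal.ofReal (len J.1)) /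
      ENNReal.ofReal (len I)

/-- The `L^p_X = L^p([0,1]; X)` (Bochner) norm of `f = ∑_{I ∈ s} x_I h_I`. -/
def LpNormV (p : ℝ) (s : Finset DyadicI) (x : DyadicI → X) : ℝ :=
  (∫ t in Set.Icc (0 : ℝ) 1, ‖∑ I ∈ s, haar I t • x I‖ ^ p) ^ (1 / p)

/-- The operator norm `‖T_{τ,p} ⊗ Id_X : L^p_X → L^p_X‖ ∈ [0,∞]`, computed over
finitely supported Haar expansions. -/
def lpOpNorm (τ : DyadicI → DyadicI) (p : ℝ) (X : Type*) [NormedAddCommGroup X]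
    [NormedSpace ℝ X] : ℝ≥0∞ :=
  ⨆ (s : Finset DyadicI) (x : DyadicI → X) (_ : LpNormV p s x ≤ 1),
    ENNReal.ofReal (LpNormV p (s.image τ) (rearrCoef τ p s x))

/-- The operator norm `‖T_{τ,p}^{-1} ⊗ Id_X‖ ∈ [0,∞]` on the span of
`{h_J : J ∈ τ(D)}` with the `L^p_X` norm: the map determined by
`x h_{τ(I)}/|τ(I)|^{1/p} ↦ x h_I/|I|^{1/p}`, i.e. sending
`g = ∑_{I ∈ L} x_I h_{τ(I)}` to `∑_{I ∈ L} (|τ(I)|/|I|)^{1/p} x_I h_I`. -/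
def lpInvOpNorm (τ : DyadicI → DyadicI) (p : ℝ) (X : Type*) [NormedAddCommGroup X]
    [NormedSpace ℝ X] : ℝ≥0∞ :=
  ⨆ (L : Finset DyadicI) (x : DyadicI → X)
    (_ : LpNormV p (L.image τ) (fun J => ∑ I ∈ L, if τ I = J then x I else 0) ≤ 1),
    ENNReal.ofReal (LpNormV p L fun I => ((len (τ I) / len I) ^ (1 / p)) • x I)

/-- The operator norm `‖T_{τ,1}^{-1}‖₁ ∈ [0,∞]` on the span of `{h_J : J ∈ τ(D)}`
with the dyadic `H¹` norm: the map determined by `h_{τ(I)}/|τ(I)| ↦ h_I/|I|`,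
i.e. sending `g = ∑_{I ∈ L} a_I h_{τ(I)}` to `∑_{I ∈ L} (|τ(I)|/|I|) a_I h_I`. -/
def h1InvOpNorm (τ : DyadicI → DyadicI) : ℝ≥0∞ :=
  ⨆ (L : Finset DyadicI) (a : DyadicI → ℝ)
    (_ : HpNormS 1 (L.image τ) (fun J => ∑ I ∈ L, if τ I = J then a I else 0) ≤ 1),
    ENNReal.ofReal (HpNormS 1 L fun I => (len (τ I) / len I) * a I)

/-- The Rademacher average `(E_ε ‖∑_{i<n} ε_i a_i‖^p)^{1/p}` over all choices of
signs `ε_i ∈ {±1}`. -/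
def radAvg (p : ℝ) {Y : Type*} [NormedAddCommGroup Y] [NormedSpace ℝ Y] (n : ℕ)
    (a : Fin n → Y) : ℝ :=
  ((∑ ε : Fin n → Bool, ‖∑ i, (if ε i then (1 : ℝ) else -1) • a i‖ ^ p) / 2 ^ n) ^ (1 / p)

/-- The type-`p` constant `Type_p(Y) ∈ [0,∞]`: the least `C` such that
`(E_ε ‖∑ ε_i a_i‖^p)^{1/p} ≤ C (∑ ‖a_i‖^p)^{1/p}` for all finite families in `Y`. -/
def typeConst (p : ℝ) (Y : Type*) [NormedAddCommGroup Y] [NormedSpace ℝ Y] : ℝ≥0∞ :=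
  sInf {C : ℝ≥0∞ | ∀ (n : ℕ) (a : Fin n → Y),
    ENNReal.ofReal (radAvg p n a) ≤ C * ENNReal.ofReal ((∑ i, ‖a i‖ ^ p) ^ (1 / p))}

/-- The UMD property of a Banach space `E`: for each `1 < r < ∞` the Haar system is
unconditional in `L^r_E`. -/
def IsUMD (E : Type*) [NormedAddCommGroup E] [NormedSpace ℝ E] : Prop :=
  ∀ r : ℝ, 1 < r → ∃ β : ℝ, ∀ (s : Finset DyadicI) (x : DyadicI → E) (ε : DyadicI → ℝ),
    (∀ I, ε I = 1 ∨ ε I = -1) →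
    LpNormV r s (fun I => ε I • x I) ≤ β * LpNormV r s x

/-- `B` is a block in `L` with top `I`: `B ⊆ L`, `I` is the unique maximal interval
of `B`, and `B` is order-convex in `L` between its elements and `I`. -/
def IsBlock (L : Set DyadicI) (B : Set DyadicI) (I : DyadicI) : Prop :=
  B ⊆ L ∧ I ∈ B ∧ (∀ J ∈ B, toSet J ⊆ toSet I) ∧
    ∀ J ∈ B, ∀ K ∈ L, toSet J ⊆ toSet K → toSet K ⊆ toSet I → K ∈ B

/-- `G₁(K | E)`: the maximal dyadic intervals of `E` strictly contained in `K`. -/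
def gen1 (K : DyadicI) (E : Set DyadicI) : Set DyadicI :=
  {J | J ∈ E ∧ toSet J ⊂ toSet K ∧
    ∀ J' ∈ E, toSet J' ⊂ toSet K → toSet J ⊆ toSet J' → J' = J}

end Defs

/-!
For finite `F`, cut the intervals `τ(I)`, `I ∈ F`, in decreasing order of `|I|/|τ(I)|` into
disjoint pieces `E_I ⊆ τ(I)`; then `∫ μ ≤ ∑_I (|I|/|τ(I)|) |E_I|`. Put `c_I = (|E_I|/|τ(I)|)^{1/2}`.
Since the `E_I` are disjoint, `g = ∑_I c_I h_{τ(I)}` has `‖g‖_{BMO} ≤ 1`, while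
`S_σ g = ∑_I c_I h_I` and `∑_I (|I|/|τ(I)|) |E_I| = ∑_I c_I² |I| ≤ |F*| ‖S_σ g‖²_{BMO}`, by
splitting the sum over the maximal intervals of `F`, which are disjoint and cover `F*`.
Monotone convergence passes from finite to arbitrary collections.
-/
namespace DyadicI

lemma len_eq_inv (I : DyadicI) : I.len = ((2 : ℝ) ^ I.n)⁻¹ := by
  rw [len, zpow_neg, zpow_natCast]

lemma len_pos (I : DyadicI) : 0 < I.len := zpow_pos two_pos _

lemma mem_toSet_iff {I : DyadicI} {t : ℝ} :
    t ∈ toSet I ↔ 0 ≤ t ∧ ⌊t * 2 ^ I.n⌋₊ = I.k := by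
  have hN : (0 : ℝ) < 2 ^ I.n := by positivity
  have hright : I.lep + I.len = (I.k + 1) * ((2 : ℝ) ^ I.n)⁻¹ := by
    rw [lep, len_eq_inv]; ring
  rw [toSet, Set.mem_Ico, hright, lep, len_eq_inv, mul_inv_le_iff₀ hN, lt_mul_inv_iff₀ hN]
  constructor
  · rintro ⟨hk, hk1⟩
    have ht : 0 ≤ t * 2 ^ I.n := (Nat.cast_nonneg _).trans hk
    exact ⟨nonneg_of_mul_nonneg_left ht hN, (Nat.floor_eq_iff ht).2 ⟨hk, hk1⟩⟩
  · rintro ⟨ht, hk⟩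
    exact (Nat.floor_eq_iff (by positivity)).1 hk

lemma toSet_subset_or_disjoint_of_n_le {I J : DyadicI} (h : J.n ≤ I.n) :
    toSet I ⊆ toSet J ∨ Disjoint (toSet I) (toSet J) := by
  -- on `I` the coarser digit `⌊t 2^{J.n}⌋` is the constant `I.k / 2^(I.n - J.n)`
  have key : ∀ t ∈ toSet I, ⌊t * 2 ^ J.n⌋₊ = I.k / 2 ^ (I.n - J.n) := by
    intro t ht
    rw [mem_toSet_iff] at ht
    rw [← ht.2, ← Nat.floor_div_natCast, Nat.cast_pow, Nat.cast_ofNat, mul_div_assoc,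
      ← pow_sub_mul_pow (2 : ℝ) h, mul_div_cancel_left₀ _ (by positivity)]
  by_cases hk : I.k / 2 ^ (I.n - J.n) = J.k
  · refine Or.inl fun t ht => mem_toSet_iff.2 ⟨(mem_toSet_iff.1 ht).1, ?_⟩
    rw [key t ht, hk]
  · refine Or.inr (Set.disjoint_left.2 fun t ht htJ => hk ?_)
    rw [← key t ht, (mem_toSet_iff.1 htJ).2]

lemma toSet_subset_or_subset_or_disjoint (I J : DyadicI) :
    toSet I ⊆ toSet J ∨ toSet J ⊆ toSet I ∨ Disjoint (toSet I) (toSet J) := by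
  rcases le_total J.n I.n with h | h
  · exact (toSet_subset_or_disjoint_of_n_le h).imp_right Or.inr
  · exact (toSet_subset_or_disjoint_of_n_le h).elim (Or.inr ∘ Or.inl)
      fun hd => Or.inr (Or.inr hd.symm)

lemma lep_mem_toSet (I : DyadicI) : I.lep ∈ toSet I :=
  Set.left_mem_Ico.2 (lt_add_of_pos_right _ (len_pos I))

lemma measurableSet_toSet (I : DyadicI) : MeasurableSet (toSet I) := measurableSet_Ico

lemma volume_toSet (I : DyadicI) : volume (toSet I) = ENNReal.ofReal I.len := by
  rw [toSet, Real.volume_Ico, add_sub_cancel_left]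

lemma toSet_injective : Function.Injective toSet := by
  rintro ⟨n, k, hk⟩ ⟨n', k', hk'⟩ h
  have hlen : len ⟨n, k, hk⟩ = len ⟨n', k', hk'⟩ := by
    have := congrArg volume h
    rwa [volume_toSet, volume_toSet,
      ENNReal.ofReal_eq_ofReal_iff (len_pos _).le (len_pos _).le] at this
  obtain rfl : n = n' := by
    simp only [len_eq_inv, inv_inj] at hlen
    exact pow_right_injective₀ two_pos (by norm_num) hlen
  obtain rfl : k = k' := by
    have := (mem_toSet_iff.1 (h ▸ lep_mem_toSet ⟨n, k, hk⟩)).2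
    rwa [(mem_toSet_iff.1 (lep_mem_toSet ⟨n, k, hk⟩)).2] at this
  rfl

instance : PartialOrder DyadicI := PartialOrder.lift toSet toSet_injective

lemma le_iff_toSet_subset {I J : DyadicI} : I ≤ J ↔ toSet I ⊆ toSet J := Iff.rfl

instance : Countable DyadicI :=
  Function.Injective.countable (f := fun I : DyadicI => (I.n, I.k)) fun I J h => by
    obtain ⟨n, k, _⟩ := I; obtain ⟨n', k', _⟩ := J
    obtain ⟨rfl, rfl⟩ := Prod.mk.inj h
    rfl

end DyadicI

lemma disjoint_toSet_of_maximal {F : Finset DyadicI} {K K' : DyadicI}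
    (hK : Maximal (· ∈ F) K) (hK' : Maximal (· ∈ F) K') (hne : K ≠ K') :
    Disjoint (toSet K) (toSet K') := by
  rcases toSet_subset_or_subset_or_disjoint K K' with h | h | h
  · exact absurd (hK.eq_of_le hK'.1 h) hne
  · exact absurd (hK'.eq_of_le hK.1 h).symm hne
  · exact h

lemma pointSet_eq_biUnion_maximal (F : Finset DyadicI) :
    pointSet ↑F = ⋃ K ∈ F.filter (Maximal (· ∈ F)), toSet K := by
  refine subset_antisymm (Set.iUnion₂_subset fun I hI => ?_) (Set.iUnion₂_subset fun K hK => ?_)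
  · obtain ⟨K, hIK, hK⟩ := F.exists_le_maximal hI
    exact le_iff_toSet_subset.1 hIK |>.trans
      (Set.subset_biUnion_of_mem (u := toSet) (Finset.mem_filter.2 ⟨hK.1, hK⟩))
  · exact Set.subset_biUnion_of_mem (u := toSet) (Finset.mem_filter.1 hK).1

lemma volume_pointSet_eq_sum_maximal (F : Finset DyadicI) :
    volume (pointSet ↑F) = ∑ K ∈ F.filter (Maximal (· ∈ F)), ENNReal.ofReal K.len := by
  rw [pointSet_eq_biUnion_maximal, measure_biUnion_finset
    (fun K hK K' hK' hne => disjoint_toSet_of_maximal (Finset.mem_filter.1 hK).2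
      (Finset.mem_filter.1 hK').2 hne) fun K _ => measurableSet_toSet K]
  exact Finset.sum_congr rfl fun K _ => volume_toSet K

lemma sum_le_volume_pointSet_mul (F : Finset DyadicI) (w : DyadicI → ℝ≥0∞) {B : ℝ≥0∞}
    (h : ∀ K ∈ F, ∑ I ∈ F with I ≤ K, w I ≤ ENNReal.ofReal K.len * B) :
    ∑ I ∈ F, w I ≤ volume (pointSet ↑F) * B := by
  set M := F.filter (Maximal (· ∈ F))
  calc ∑ I ∈ F, w I ≤ ∑ I ∈ F, ∑ K ∈ M with I ≤ K, w I := by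
        refine Finset.sum_le_sum fun I hI => ?_
        obtain ⟨K, hIK, hK⟩ := F.exists_le_maximal hI
        exact Finset.single_le_sum (f := fun _ => w I) (fun _ _ => zero_le)
          (Finset.mem_filter.2 ⟨Finset.mem_filter.2 ⟨hK.1, hK⟩, hIK⟩)
    _ = ∑ K ∈ M, ∑ I ∈ F with I ≤ K, w I := Finset.sum_comm' fun I K => by
        simp only [M, Finset.mem_filter]; tauto
    _ ≤ ∑ K ∈ M, ENNReal.ofReal K.len * B :=
        Finset.sum_le_sum fun K hK => h K (Finset.mem_filter.1 hK).1
    _ = volume (pointSet ↑F) * B := by rw [← Finset.sum_mul, volume_pointSet_eq_sum_maximal]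

theorem exists_pairwiseDisjoint_iSup_indicator_le_sum {α ι : Type*} [MeasurableSpace α]
    (s : Finset ι) (r : ι → ℝ≥0∞) {A : ι → Set α} (hA : ∀ i, MeasurableSet (A i)) :
    ∃ E : ι → Set α, (∀ i, MeasurableSet (E i)) ∧ (∀ i, E i ⊆ A i) ∧
      (s : Set ι).PairwiseDisjoint E ∧
      ∀ x, ⨆ i ∈ s, (A i).indicator (fun _ => r i) x ≤
        ∑ i ∈ s, (E i).indicator (fun _ => r i) x := by
  classical
  induction s using Finset.induction_on_max_value r with
  | empty => exact ⟨fun _ => ∅, fun _ => .empty, fun _ => Set.empty_subset _, by simp, by simp⟩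
  | insert a s ha hmax ih =>
    obtain ⟨E, hEm, hEA, hEd, hE⟩ := ih
    -- the index of largest weight keeps all of `A a`; the others give it up
    set E' : ι → Set α := fun i => if i = a then A a else E i \ A a
    have hE'a : E' a = A a := if_pos rfl
    have hE's : ∀ i ∈ s, E' i = E i \ A a := fun i hi => if_neg (ne_of_mem_of_not_mem hi ha)
    refine ⟨E', fun i => ?_, fun i => ?_, ?_, fun x => ?_⟩
    · by_cases hi : i = a
      · rw [hi, hE'a]; exact hA a
      · simp only [E', if_neg hi]; exact (hEm i).diff (hA a)
    · by_cases hi : i = a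
      · rw [hi, hE'a]
      · simp only [E', if_neg hi]; exact Set.sdiff_subset.trans (hEA i)
    · rw [Finset.coe_insert]
      refine (hEd.mono_on fun i hi => (hE's i hi).le.trans Set.sdiff_subset).insert
        fun j hj _ => ?_
      rw [hE'a, hE's j hj]
      exact Set.disjoint_sdiff_right
    · rw [Finset.iSup_insert, Finset.sum_insert ha, hE'a]
      by_cases hx : x ∈ A a
      · rw [Set.indicator_of_mem hx]
        refine le_add_right (sup_le le_rfl (iSup₂_le fun i hi => ?_))
        exact (Set.indicator_le_self _ _ x).trans (hmax i hi)
      · rw [Set.indicator_of_notMem hx, zero_add, max_eq_right zero_le]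
        refine (hE x).trans_eq (Finset.sum_congr rfl fun i hi => ?_)
        simp only [hE's i hi, Set.indicator_apply, Set.mem_sdiff, hx, not_false_eq_true, and_true]

theorem lintegral_biSup_le_of_forall_finset {α ι : Type*} [MeasurableSpace α] [Countable ι]
    {μ : Measure α} {f : ι → α → ℝ≥0∞} (hf : ∀ i, Measurable (f i)) (L : Set ι) {c : ℝ≥0∞}
    (h : ∀ F : Finset ι, ↑F ⊆ L → ∫⁻ x, ⨆ i ∈ F, f i x ∂μ ≤ c) :
    ∫⁻ x, ⨆ i ∈ L, f i x ∂μ ≤ c := by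
  have hsup : ∀ x, ⨆ i ∈ L, f i x = ⨆ F : {F : Finset ι // ↑F ⊆ L}, ⨆ i ∈ F.1, f i x :=
    fun x => le_antisymm
      (iSup₂_le fun i hi => le_iSup_of_le ⟨{i}, by simpa using hi⟩ (by simp))
      (iSup_le fun F => iSup₂_le fun i hi => le_iSup₂_of_le i (F.2 hi) le_rfl)
  have hdir : Directed (· ≤ ·) fun (F : {F : Finset ι // ↑F ⊆ L}) x => ⨆ i ∈ F.1, f i x :=
    fun F G => ⟨⟨F.1 ∪ G.1, by simpa using And.intro F.2 G.2⟩,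
      fun x => biSup_mono fun _ => Finset.mem_union_left _,
      fun x => biSup_mono fun _ => Finset.mem_union_right _⟩
  simp_rw [hsup]
  rw [lintegral_iSup_directed
    (fun F => (Measurable.iSup fun i => Measurable.iSup fun _ => hf i).aemeasurable) hdir]
  exact iSup_le fun F => h F.1 F.2

lemma ofReal_sum_le_len_mul_bmoSq (s : Finset DyadicI) (a : DyadicI → ℝ) (K : DyadicI) :
    ENNReal.ofReal (∑ J ∈ s with toSet J ⊆ toSet K, a J ^ 2 * len J) ≤
      ENNReal.ofReal K.len * bmoSq s a := by
  rw [← mul_div_cancel₀ (∑ J ∈ s with toSet J ⊆ toSet K, a J ^ 2 * len J) (len_pos K).ne',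
    ENNReal.ofReal_mul (len_pos K).le]
  exact mul_le_mul_right (le_iSup (fun I => ENNReal.ofReal
    ((∑ J ∈ s with toSet J ⊆ toSet I, a J ^ 2 * len J) / len I)) K) _

lemma bmoSq_le_one {s : Finset DyadicI} {a : DyadicI → ℝ}
    (h : ∀ K, ∑ J ∈ s with toSet J ⊆ toSet K, a J ^ 2 * len J ≤ K.len) : bmoSq s a ≤ 1 :=
  iSup_le fun K => ENNReal.ofReal_le_one.2 ((div_le_one (len_pos K)).2 (h K))

lemma sum_ofReal_sq_mul_len_le_volume_pointSet_mul_bmoSq (F : Finset DyadicI) (a : DyadicI → ℝ) :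
    ∑ I ∈ F, ENNReal.ofReal (a I ^ 2 * len I) ≤ volume (pointSet ↑F) * bmoSq F a := by
  refine sum_le_volume_pointSet_mul F _ fun K _ => ?_
  rw [← ENNReal.ofReal_sum_of_nonneg fun I _ => by have := len_pos I; positivity]
  exact ofReal_sum_le_len_mul_bmoSq F a K

section Rearrangement

variable {τ : DyadicI → DyadicI}

lemma sSigmaSupp_image (hτ : Function.Injective τ) (F : Finset DyadicI) :
    sSigmaSupp τ (F.image τ) = F := by
  rw [sSigmaSupp, Finset.filter_true_of_mem fun J hJ => by
      obtain ⟨I, -, rfl⟩ := Finset.mem_image.1 hJ; exact Set.mem_range_self I,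
    Finset.image_image, (Function.leftInverse_invFun hτ).comp_eq_id, Finset.image_id]

lemma bmoSq_sSigma_image_comp_invFun (hτ : Function.Injective τ) (F : Finset DyadicI)
    (c : DyadicI → ℝ) :
    bmoSq (sSigmaSupp τ (F.image τ)) (sSigmaCoef τ (F.image τ) (c ∘ Function.invFun τ)) =
      bmoSq F c := by
  rw [sSigmaSupp_image hτ]
  refine iSup_congr fun K => congrArg _ (congrArg (· / _) (Finset.sum_congr rfl fun I hI => ?_))
  rw [sSigmaCoef, if_pos (Finset.mem_image_of_mem τ (Finset.mem_filter.1 hI).1),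
    Function.comp_apply, Function.leftInverse_invFun hτ I]

lemma bmoSq_image_comp_invFun_le_one (hτ : Function.Injective τ) (F : Finset DyadicI)
    (c : DyadicI → ℝ)
    (h : ∀ K, ∑ I ∈ F with toSet (τ I) ⊆ toSet K, c I ^ 2 * len (τ I) ≤ K.len) :
    bmoSq (F.image τ) (c ∘ Function.invFun τ) ≤ 1 :=
  bmoSq_le_one fun K => by
    rw [Finset.filter_image, Finset.sum_image hτ.injOn]
    simpa only [Function.comp_apply, Function.leftInverse_invFun hτ _] using h K

lemma bmoSq_sSigma_le_bmoOpNorm_sq {s : Finset DyadicI} {a : DyadicI → ℝ} (h : bmoSq s a ≤ 1) :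
    bmoSq (sSigmaSupp τ s) (sSigmaCoef τ s a) ≤ bmoOpNorm τ ^ 2 := by
  rw [← ENNReal.rpow_ofNat, ← ENNReal.rpow_inv_le_iff (by norm_num), ← one_div]
  exact le_iSup₂_of_le s a (le_iSup_of_le h le_rfl)

end Rearrangement

lemma muSet_eq_biSup_indicator (τ : DyadicI → DyadicI) (L : Set DyadicI) (t : ℝ) :
    muSet τ L t =
      ⨆ I ∈ L, (toSet (τ I)).indicator (fun _ => ENNReal.ofReal (len I / len (τ I))) t :=
  iSup_congr fun I => iSup_congr fun _ => by by_cases ht : t ∈ toSet (τ I) <;> simp [ht]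

theorem lintegral_muSet_finset_le (τ : DyadicI → DyadicI) (hτ : Function.Injective τ)
    (F : Finset DyadicI) :
    ∫⁻ t in Set.Icc (0 : ℝ) 1, muSet τ ↑F t ≤ volume (pointSet ↑F) * bmoOpNorm τ ^ 2 := by
  set μ := volume.restrict (Set.Icc (0 : ℝ) 1)
  set r : DyadicI → ℝ≥0∞ := fun I => ENNReal.ofReal (len I / len (τ I))
  obtain ⟨E, hEm, hEτ, hEd, hE⟩ := exists_pairwiseDisjoint_iSup_indicator_le_sum F r
    fun I => measurableSet_toSet (τ I)
  have hμE : ∀ I, μ (E I) ≤ ENNReal.ofReal (len (τ I)) := fun I =>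
    (Measure.restrict_le_self _).trans ((measure_mono (hEτ I)).trans_eq (volume_toSet _))
  have hμE_ne_top : ∀ I, μ (E I) ≠ ∞ := fun I =>
    ne_top_of_le_ne_top ENNReal.ofReal_ne_top (hμE I)
  -- the test function: the coefficient of `h_{τ(I)}` carries the mass `μ (E I)`
  set c : DyadicI → ℝ := fun I => Real.sqrt ((μ (E I)).toReal / len (τ I))
  have hc : ∀ I, c I ^ 2 * len (τ I) = (μ (E I)).toReal := fun I => by
    rw [Real.sq_sqrt (div_nonneg ENNReal.toReal_nonneg (len_pos _).le),
      div_mul_cancel₀ _ (len_pos _).ne']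
  have hpack : ∀ K, ∑ I ∈ F with toSet (τ I) ⊆ toSet K, c I ^ 2 * len (τ I) ≤ K.len := by
    intro K
    simp only [hc]
    rw [← ENNReal.toReal_sum fun I _ => hμE_ne_top I, ← measure_biUnion_finset
      (hEd.subset (Finset.coe_subset.2 (Finset.filter_subset _ _))) fun I _ => hEm I]
    refine ENNReal.toReal_le_of_le_ofReal (len_pos K).le ?_
    refine (Measure.restrict_le_self _).trans ((measure_mono ?_).trans_eq (volume_toSet K))
    exact Set.iUnion₂_subset fun I hI => (hEτ I).trans (Finset.mem_filter.1 hI).2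
  have htest : bmoSq (F.image τ) (c ∘ Function.invFun τ) ≤ 1 :=
    bmoSq_image_comp_invFun_le_one hτ F c hpack
  calc ∫⁻ t in Set.Icc (0 : ℝ) 1, muSet τ ↑F t
      ≤ ∫⁻ t, ∑ I ∈ F, (E I).indicator (fun _ => r I) t ∂μ :=
        lintegral_mono fun t => (muSet_eq_biSup_indicator τ ↑F t).trans_le (hE t)
    _ = ∑ I ∈ F, r I * μ (E I) := by
        rw [lintegral_finsetSum _ fun I _ => measurable_const.indicator (hEm I)]
        exact Finset.sum_congr rfl fun I _ => lintegral_indicator_const (hEm I) _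
    _ = ∑ I ∈ F, ENNReal.ofReal (c I ^ 2 * len I) := Finset.sum_congr rfl fun I _ => by
        rw [← ENNReal.ofReal_toReal (hμE_ne_top I), ← ENNReal.ofReal_mul
          (div_nonneg (len_pos I).le (len_pos _).le), ← hc]
        have := (len_pos (τ I)).ne'
        congr 1
        field_simp
    _ ≤ volume (pointSet ↑F) * bmoSq F c :=
        sum_ofReal_sq_mul_len_le_volume_pointSet_mul_bmoSq F c
    _ = volume (pointSet ↑F) *
          bmoSq (sSigmaSupp τ (F.image τ)) (sSigmaCoef τ (F.image τ) (c ∘ Function.invFun τ)) := by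
        rw [bmoSq_sSigma_image_comp_invFun hτ]
    _ ≤ volume (pointSet ↑F) * bmoOpNorm τ ^ 2 :=
        mul_le_mul_right (bmoSq_sSigma_le_bmoOpNorm_sq htest) _

theorem lintegral_muSet_le (τ : DyadicI → DyadicI) (hτ : Function.Injective τ)
    (L : Set DyadicI) :
    ∫⁻ t in Set.Icc (0 : ℝ) 1, muSet τ L t ≤ volume (pointSet L) * bmoOpNorm τ ^ 2 := by
  simp_rw [muSet_eq_biSup_indicator]
  refine lintegral_biSup_le_of_forall_finset
    (fun I => measurable_const.indicator (measurableSet_toSet (τ I))) L fun F hF => ?_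
  simp_rw [← Finset.mem_coe, ← muSet_eq_biSup_indicator]
  exact (lintegral_muSet_finset_le τ hτ F).trans
    (mul_le_mul_left (measure_mono (Set.biUnion_subset_biUnion_left hF)) _)

/-- For every injective `τ : D → D` (with inverse `σ = τ⁻¹` on `τ(D)`)
and every nonempty collection `H ⊆ τ(D)` (written as `H = τ(L)` for nonempty `L ⊆ D`,
so that `μ_H = muSet τ L` and `σ(H)* = L*`), one has
`∫₀¹ μ_H(t) dt ≤ |σ(H)*| · ‖S_σ‖_{BMO}²`; consequently `C₁ ≤ ‖S_σ‖_{BMO}²`. -/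
theorem statement3 (τ : DyadicI → DyadicI) (hτ : Function.Injective τ) :
    (∀ L : Set DyadicI, L.Nonempty →
      (∫⁻ t in Set.Icc (0 : ℝ) 1, muSet τ L t) ≤
        volume (pointSet L) * bmoOpNorm τ ^ 2) ∧
    Cone τ ≤ bmoOpNorm τ ^ 2 :=
  ⟨fun L _ => lintegral_muSet_le τ hτ L,
    iSup₂_le fun L _ => ENNReal.div_le_of_le_mul' (lintegral_muSet_le τ hτ L)⟩
end
end

section
/- Let τ : D → D be injective, let L ⊆ D be finite, and let f = Σ_{J∈L} a_J h_J with real coefficients a_J. Then for every t ∈ [0,1], S(T_{τ,1} f)(t) ≤ μ_{τ(L)}(t)^{1/2} · S(T_{τ,2} f)(t), where τ(L) = {τ(J) : J ∈ L}. -/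
/-! At the point `t`, the coefficient of `h_{τ(I)}` in `T_{τ,1} f` is `r_I a_I` and in
`T_{τ,2} f` it is `r_I^{1/2} a_I`, where `r_I = |I|/|τ(I)|`. Hence each summand of
`S(T_{τ,1} f)(t)²` equals `r_I 1_{τ(I)}(t)` times the corresponding summand of
`S(T_{τ,2} f)(t)²`, and `r_I 1_{τ(I)}(t) ≤ μ_{τ(L)}(t)`. -/

open MeasureTheory Set
open scoped ENNReal NNReal Classical

noncomputable section

open DyadicI

lemma DyadicI.len_pos_s7 (I : DyadicI) : 0 < I.len := by
  unfold len; positivity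

lemma rearrCoefS_apply_image {τ : DyadicI → DyadicI} (hτ : Function.Injective τ) (p : ℝ)
    {L : Finset DyadicI} (a : DyadicI → ℝ) {I : DyadicI} (hI : I ∈ L) :
    rearrCoefS τ p L a (τ I) = (len I / len (τ I)) ^ (1 / p) * a I := by
  unfold rearrCoefS
  rw [Finset.sum_eq_single_of_mem I hI fun I' _ hne => if_neg fun h => hne (hτ h), if_pos rfl]

lemma sqFnS_image {τ : DyadicI → DyadicI} (hτ : Function.Injective τ) (L : Finset DyadicI)
    (c : DyadicI → ℝ) (t : ℝ) :
    sqFnS (L.image τ) c t =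
      √(∑ I ∈ L, c (τ I) ^ 2 * (toSet (τ I)).indicator (fun _ => (1 : ℝ)) t) := by
  rw [sqFnS, Finset.sum_image hτ.injOn]

lemma le_muFin {τ : DyadicI → DyadicI} {L : Finset DyadicI} (t : ℝ) {I : DyadicI}
    (hI : I ∈ L) :
    len I / len (τ I) * (toSet (τ I)).indicator (fun _ => (1 : ℝ)) t ≤ muFin τ L t :=
  (Real.le_coe_toNNReal _).trans <| NNReal.coe_le_coe.mpr <|
    Finset.le_sup (f := fun I => Real.toNNReal
      (len I / len (τ I) * (toSet (τ I)).indicator (fun _ => (1 : ℝ)) t)) hI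

lemma muFin_nonneg (τ : DyadicI → DyadicI) (L : Finset DyadicI) (t : ℝ) : 0 ≤ muFin τ L t :=
  NNReal.coe_nonneg _

lemma sq_mul_mul_le_of_idempotent {r e m : ℝ} (x : ℝ) (hr : 0 ≤ r) (he : e * e = e)
    (hrm : r * e ≤ m) : (r * x) ^ 2 * e ≤ m * (r * x ^ 2 * e) := by
  have he0 : 0 ≤ e := he ▸ mul_self_nonneg e
  calc (r * x) ^ 2 * e = (r * e) * (r * x ^ 2 * e) := by linear_combination r ^ 2 * x ^ 2 * he.symm
    _ ≤ m * (r * x ^ 2 * e) := by gcongr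

theorem statement7_general (τ : DyadicI → DyadicI) (hτ : Function.Injective τ)
    (L : Finset DyadicI) (a : DyadicI → ℝ) (t : ℝ) :
    sqFnS (L.image τ) (rearrCoefS τ 1 L a) t ≤
      Real.sqrt (muFin τ L t) * sqFnS (L.image τ) (rearrCoefS τ 2 L a) t := by
  rw [sqFnS_image hτ, sqFnS_image hτ, ← Real.sqrt_mul (muFin_nonneg τ L t), Finset.mul_sum]
  refine Real.sqrt_le_sqrt (Finset.sum_le_sum fun I hI => ?_)
  have hr : 0 ≤ len I / len (τ I) := (div_pos I.len_pos_s7 (τ I).len_pos_s7).le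
  rw [rearrCoefS_apply_image hτ _ _ hI, rearrCoefS_apply_image hτ _ _ hI, div_one,
    Real.rpow_one, ← Real.sqrt_eq_rpow, mul_pow √_, Real.sq_sqrt hr]
  exact sq_mul_mul_le_of_idempotent _ hr (by by_cases h : t ∈ toSet (τ I) <;> simp [h])
    (le_muFin t hI)

/-- Let `τ : D → D` be injective, `L ⊆ D` finite and
`f = ∑_{J ∈ L} a_J h_J`. Then for every `t ∈ [0,1]`,
`S(T_{τ,1} f)(t) ≤ μ_{τ(L)}(t)^{1/2} · S(T_{τ,2} f)(t)`. -/
theorem statement7 (τ : DyadicI → DyadicI) (hτ : Function.Injective τ)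
    (L : Finset DyadicI) (a : DyadicI → ℝ) (t : ℝ) (ht : t ∈ Set.Icc (0 : ℝ) 1) :
    sqFnS (L.image τ) (rearrCoefS τ 1 L a) t ≤
      Real.sqrt (muFin τ L t) * sqFnS (L.image τ) (rearrCoefS τ 2 L a) t :=
  statement7_general τ hτ L a t
end
end
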